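/- For every natural number n ≥ 1, E(f_n, f_{n+1}, f_{n+2}) = f_{n+2}·(f_{n+1}^2 + f_n^2 + f_{n−1}^2). -/

import Mathlib

/-- Fibonacci numbers as integers. -/
noncomputable def f (n : ℕ) : ℤ := (Nat.fib n : ℤ)

/-- `E x y z = x^3 + y^3 + z^3 - 3xyz`. -/
def E (x y z : ℤ) : ℤ := x ^ 3 + y ^ 3 + z ^ 3 - 3 * x * y * z

/-- On a Fibonacci-type triple `(a, b, b + a)`, whose preceding term is `b - a`, both sides
equal `2 (a + b) (a² - ab + b²)`. -/
theorem E_add (a b : ℤ) : E a b (b + a) = (b + a) * (b ^ 2 + a ^ 2 + (b - a) ^ 2) := by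
  unfold E
  ring

theorem f_add_two (n : ℕ) : f (n + 2) = f (n + 1) + f n := by
  simp only [f, Nat.fib_add_two, Nat.cast_add]
  ring

theorem stmt3 (n : ℕ) (hn : 1 ≤ n) :
    E (f n) (f (n + 1)) (f (n + 2)) =
      f (n + 2) * (f (n + 1) ^ 2 + f n ^ 2 + f (n - 1) ^ 2) := by
  obtain ⟨m, rfl⟩ := Nat.exists_eq_add_of_le' hn
  have h_prev : f m = f (m + 1 + 1) - f (m + 1) := by
    rw [f_add_two]
    ring
  rw [f_add_two (m + 1), E_add, Nat.add_sub_cancel, h_prev]
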